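/- Fix integers k > i ≥ 1, N₁ ≥ N₂ ≥ ⋯ ≥ N_{k−1} ≥ 0 and n ≥ 0. The map that doubles every part of an overpartition (sending each non-overlined part t to the non-overlined part 2t and each overlined part t̄ to the overlined part \overline{2t}) is a bijection from Ẽ_{N₁,…,N_{k−1};i}(n) onto W̃_{N₁,…,N_{k−1};i}(2n); moreover it sends the Gordon marking of each part to the Göllnitz–Gordon marking of the doubled part. -/

import Mathlib

open scoped BigOperators

/-- A part of an overpartition: its size, and whether it is overlined. -/
abbrev OPart := ℕ × Bool

/-- An overpartition: `f t` is the number of non-overlined parts equal to `t`, and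
`fbar t` is the number of overlined parts equal to `t` (at most one, since only the
first occurrence of a number may be overlined).  There are no parts of size `0`. -/
structure Overpartition where
  f : ℕ →₀ ℕ
  fbar : ℕ →₀ ℕ
  fbar_le_one : ∀ t, fbar t ≤ 1
  f_zero : f 0 = 0
  fbar_zero : fbar 0 = 0

namespace Overpartition

/-- the number of parts -/
def parts (l : Overpartition) : ℕ :=
  l.f.sum (fun _ m => m) + l.fbar.sum (fun _ m => m)

/-- weight: the sum of all parts -/
def wt (l : Overpartition) : ℕ :=
  l.f.sum (fun t m => t * m) + l.fbar.sum (fun t m => t * m)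

/-- `V l s`: the number of overlined parts of size at most `s` -/
def V (l : Overpartition) (s : ℕ) : ℕ := ∑ t ∈ Finset.Icc 1 s, l.fbar t

end Overpartition

/-- The difference/congruence conditions defining `Õ_{k,i}`. -/
def OCond (k i : ℕ) (l : Overpartition) : Prop :=
  (l.fbar 1 + l.f 2 ≤ i - 1) ∧
  (∀ t, 1 ≤ t → l.f (2*t) + l.fbar (2*t) + l.fbar (2*t+1) + l.f (2*t+2) ≤ k - 1) ∧
  (∀ t, 1 ≤ l.f (2*t+1) → l.f (2*t+2) ≤ k - 2) ∧
  (∀ t, 1 ≤ t → l.f (2*t) + l.fbar (2*t) + l.fbar (2*t+1) + l.f (2*t+2) = k - 1 →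
    t * l.f (2*t) + t * l.fbar (2*t) + t * l.fbar (2*t+1) + (t+1) * l.f (2*t+2)
      ≡ l.V (2*t+1) + i - 1 [MOD 2]) ∧
  (∀ t, 1 ≤ l.f (2*t+1) → l.f (2*t+2) = k - 2 →
    t + (t+1) * l.f (2*t+2) ≡ l.V (2*t+1) + i - 1 [MOD 2])

/-- Non-overlined parts are not congruent to `0, ±(2i-1)` modulo `4k-4`. -/
def PCond (k i : ℕ) (l : Overpartition) : Prop :=
  ∀ t, 0 < l.f t →
    ¬ t ≡ 0 [MOD 4*k-4] ∧ ¬ t ≡ 2*i-1 [MOD 4*k-4] ∧ ¬ t ≡ 4*k-3-2*i [MOD 4*k-4]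

/-- The difference/congruence conditions defining `Ẽ_{k,i}`. -/
def ECond (k i : ℕ) (l : Overpartition) : Prop :=
  l.f 1 ≤ i - 1 ∧
  (∀ t, 1 ≤ t → l.f t + l.fbar t + l.f (t+1) ≤ k - 1) ∧
  (∀ t, 1 ≤ t → l.f t + l.fbar t + l.f (t+1) = k - 1 →
    t * l.f t + t * l.fbar t + (t+1) * l.f (t+1) ≡ l.V t + i - 1 [MOD 2])

/-- the smallest part (in the order `1̄ < 1 < 2̄ < 2 < ⋯`) exists and is non-overlined -/
def SmallestNonOverlined (l : Overpartition) : Prop :=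
  ∃ s, 0 < l.f s ∧ l.fbar s = 0 ∧ ∀ t < s, l.f t = 0 ∧ l.fbar t = 0

/-- the smallest part (in the order `1̄ < 1 < 2̄ < 2 < ⋯`) exists and is overlined -/
def SmallestOverlined (l : Overpartition) : Prop :=
  ∃ s, 0 < l.fbar s ∧ ∀ t < s, l.f t = 0 ∧ l.fbar t = 0

def NoOverlined (l : Overpartition) : Prop := ∀ t, l.fbar t = 0

def NoOdd (l : Overpartition) : Prop := ∀ t, t % 2 = 1 → l.f t = 0 ∧ l.fbar t = 0

/-- the list of the parts of sizes `1,…,B` in increasing order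
(`1̄ < 1 < 2̄ < 2 < ⋯`); an overlined part is `(t, true)`. -/
def partsListUpTo (l : Overpartition) (B : ℕ) : List OPart :=
  (List.range B).flatMap (fun t =>
    (if l.fbar (t+1) = 1 then [((t+1 : ℕ), true)] else []) ++
    List.replicate (l.f (t+1)) ((t+1 : ℕ), false))

def obound (l : Overpartition) : ℕ := (l.f.support ∪ l.fbar.support).sup id + 1

/-- the list of all parts of `l` in increasing order -/
def partsList (l : Overpartition) : List OPart := partsListUpTo l (obound l)

/-- the multiset of parts of `l` -/
def partsMS (l : Overpartition) : Multiset OPart := (partsList l : Multiset OPart)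

/-- the least positive integer not belonging to `S` -/
def mex1 (S : Finset ℕ) : ℕ :=
  ((List.range (S.sup id + 2)).filter (fun r => decide (1 ≤ r ∧ r ∉ S))).headI

/-- the set of marks used by the already-marked parts satisfying `test` -/
def marksWhere (acc : List (OPart × ℕ)) (test : OPart → Bool) : Finset ℕ :=
  ((acc.filter (fun q => test q.1)).map (fun q => q.2)).toFinset

/-- process the parts in increasing order, assigning to each one the mark
computed by `markOf` from the previously marked parts -/
def markFold (markOf : List (OPart × ℕ) → OPart → ℕ) :
    List OPart → List (OPart × ℕ) → List (OPart × ℕ)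
  | [], acc => acc
  | p :: rest, acc => markFold markOf rest (acc ++ [(p, markOf acc p)])

/-- The Gordon marking rule: each part gets the smallest possible mark subject to:
(i) if `\overline{t+1}` is not a part, then all parts `t`, `t̄`, `t+1` get distinct
marks; (ii) if `\overline{t+1}` is a part, then the smallest mark assigned to a part
`t` or `t̄` may be reused for `t+1` or `\overline{t+1}`. -/
def gordonMarkOf (l : Overpartition) (acc : List (OPart × ℕ)) (p : OPart) : ℕ :=
  let same := marksWhere acc (fun q => decide (q.1 = p.1))
  let prev := marksWhere acc (fun q => decide (q.1 + 1 = p.1))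
  if l.fbar p.1 = 1 then
    mex1 (same ∪ (if h : prev.Nonempty then prev.erase (prev.min' h) else prev))
  else mex1 (same ∪ prev)

/-- the Gordon marking of `l`: the list of parts in increasing order with their marks -/
def gordonMarked (l : Overpartition) : List (OPart × ℕ) :=
  markFold (gordonMarkOf l) (partsList l) []

/-- `N_r`: the number of `r`-marked parts in the Gordon marking -/
def gordonN (l : Overpartition) (r : ℕ) : ℕ :=
  ((gordonMarked l).filter (fun q => decide (q.2 = r))).length

/-- The Göllnitz–Gordon marking rule (Definition 5.1): non-overlined odd and
overlined even parts get mark 1; an overlined odd part `\overline{2j+1}` gets the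
smallest mark different from those of `2j`, `\overline{2j}`; a non-overlined even part
`2j+2` gets the smallest mark different from earlier equal parts and, in case (b),
from the marks of `2j`, `\overline{2j}`, `\overline{2j+1}`; in case (c) it may not get
mark 1 and may reuse the smallest mark assigned to `2j` or `\overline{2j+1}`. -/
def ggMarkOf (l : Overpartition) (acc : List (OPart × ℕ)) (p : OPart) : ℕ :=
  if p.1 % 2 = 1 ∧ p.2 = false then 1
  else if p.1 % 2 = 0 ∧ p.2 = true then 1
  else if p.1 % 2 = 1 then
    mex1 (marksWhere acc (fun q => decide (q.1 = p.1 - 1)))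
  else
    let same := marksWhere acc (fun q => decide (q.1 = p.1))
    let lower := marksWhere acc
      (fun q => decide (q.1 = p.1 - 2 ∨ (q.1 = p.1 - 1 ∧ q.2 = true)))
    if 1 ∈ lower ∨ (l.f (p.1 - 1) = 0 ∧ l.fbar p.1 = 0) then
      mex1 (same ∪ lower)
    else
      mex1 (insert 1 same ∪ (if h : lower.Nonempty then lower.erase (lower.min' h) else lower))

/-- the Göllnitz–Gordon marking of `l` -/
def ggMarked (l : Overpartition) : List (OPart × ℕ) :=
  markFold (ggMarkOf l) (partsList l) []

/-- `N_r`: the number of `r`-marked parts in the Göllnitz–Gordon marking -/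
def ggN (l : Overpartition) (r : ℕ) : ℕ :=
  ((ggMarked l).filter (fun q => decide (q.2 = r))).length
/-- the 1-marked parts `λ^{(1)}_1 ≥ λ^{(1)}_2 ≥ ⋯` of the Göllnitz–Gordon marking,
in decreasing order (so index `j-1` holds `λ^{(1)}_j`) -/
def oneMarkedDesc (l : Overpartition) : List OPart :=
  (((ggMarked l).filter (fun q => decide (q.2 = 1))).map (fun q => q.1)).reverse

/-- the multiset of marked parts of a cluster: its `b`-th entry (0-indexed) is `(b+1)`-marked -/
def clusterMS (c : List OPart) : Multiset (OPart × ℕ) :=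
  (((c.zipIdx.map Prod.swap).map (fun q => (q.2, q.1 + 1))) : List (OPart × ℕ))

/-- there is a part of size `s` with mark `m` in the marked list `L` -/
def ExistsMarkedAt (L : List (OPart × ℕ)) (s m : ℕ) : Prop :=
  ∃ q ∈ L, q.1.1 = s ∧ q.2 = m

/-- conditions (i)–(iii) for the entry `y` (of mark `b+2`) following the entry `x`
(of mark `b+1`, i.e. 0-indexed position `b`) in a cluster -/
def chainStep (L : List (OPart × ℕ)) (b : ℕ) (x y : OPart) : Prop :=
  (x.1 % 2 = 1 → y.1 = x.1 + 1) ∧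
  (x.1 % 2 = 0 →
    (¬ ExistsMarkedAt L (x.1 + 2) (b + 1) → x.1 ≤ y.1 ∧ y.1 ≤ x.1 + 2) ∧
    (ExistsMarkedAt L (x.1 + 2) (b + 1) → x.1 ≤ y.1 ∧ y.1 ≤ x.1 + 1))

/-- cases (a), (b): the `j`-cluster is forced to be the singleton `λ^{(1)}_j` -/
def ForcedSingleton (one : List OPart) (j : ℕ) : Prop :=
  2 ≤ j ∧ ∃ cur prev, one[j-1]? = some cur ∧ one[j-2]? = some prev ∧
    (cur.1 = prev.1 ∨ (cur.1 % 2 = 1 ∧ prev.1 = cur.1 + 1))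

/-- `α` is the decomposition of the Göllnitz–Gordon marking of `l` into clusters
`α^{(N₁)}, …, α^{(1)}`: the `j`-cluster starts with the `j`-th largest 1-marked part,
the clusters partition the marked parts, forced singletons are singletons, consecutive
entries of a cluster obey conditions (i)–(iii), and each non-singleton-forced cluster
is a maximal such chain. -/
def IsClusterDecomp (l : Overpartition) (α : ℕ → List OPart) : Prop :=
  (∀ j, j = 0 ∨ ggN l 1 < j → α j = []) ∧
  (∀ j, 1 ≤ j → j ≤ ggN l 1 → (α j).head? = (oneMarkedDesc l)[j-1]?) ∧
  ((ggMarked l : Multiset (OPart × ℕ)) = ∑ j ∈ Finset.Icc 1 (ggN l 1), clusterMS (α j)) ∧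
  (∀ j, ForcedSingleton (oneMarkedDesc l) j → (α j).length = 1) ∧
  (∀ j b x y, (α j)[b]? = some x → (α j)[b+1]? = some y → chainStep (ggMarked l) b x y) ∧
  (∀ j, 1 ≤ j → j ≤ ggN l 1 → ¬ ForcedSingleton (oneMarkedDesc l) j →
    ∀ last, (α j).getLast? = some last →
      ¬ ∃ p : OPart,
        ((p, (α j).length + 1) ∈
          ((ggMarked l : Multiset (OPart × ℕ)) - ∑ j' ∈ Finset.Icc j (ggN l 1), clusterMS (α j'))) ∧
        chainStep (ggMarked l) ((α j).length - 1) last p)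

/-- the set `β(j)` (of 0-indexed positions): positions `c` such that
`|β_c^{(j)}| − |β_c^{(j+1)}| ≤ 2`, with strict inequality if either part is odd -/
def BetaIdx (α : ℕ → List OPart) (j : ℕ) : Set ℕ :=
  {c | ∃ x y, (α j)[c]? = some x ∧ (α (j+1))[c]? = some y ∧
     (x.1 : ℤ) - (y.1 : ℤ) ≤ 2 ∧ ((x.1 % 2 = 1 ∨ y.1 % 2 = 1) → (x.1 : ℤ) - (y.1 : ℤ) < 2)}

/-- `ν'` is obtained from `ν` by the second dilation of `p`-th kind: the odd part
`old` of the cluster `β^{(p)}` is replaced by the even part of size `|old|+1` with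
opposite overline status; when `p > 1` (in which case `β^{(p-1)}` must have no odd
part), additionally one part `chosen` of `β^{(p-1)}` — the entry indexed by the set
`β(p-1)` if it is nonempty, and otherwise the part of `β^{(p-1)}` of smallest size
and largest mark — is replaced by the part of size `|chosen|+1` with opposite
overline status. -/
def SecondDilationRel (ν ν' : Overpartition) (p : ℕ) : Prop :=
  ∃ α : ℕ → List OPart, IsClusterDecomp ν α ∧ 1 ≤ p ∧ p ≤ ggN ν 1 ∧
    ∃ old ∈ α p, old.1 % 2 = 1 ∧
      ((p = 1 ∧ partsMS ν' = (partsMS ν).erase old + {(old.1 + 1, !old.2)}) ∨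
       (1 < p ∧ (∀ q ∈ α (p-1), q.1 % 2 = 0) ∧
        ∃ c chosen, (α (p-1))[c]? = some chosen ∧
          ((BetaIdx α (p-1) = ∅ ∧ (∀ q ∈ α (p-1), chosen.1 ≤ q.1) ∧
             (∀ c' q, c < c' → (α (p-1))[c']? = some q → chosen.1 < q.1)) ∨
           c ∈ BetaIdx α (p-1)) ∧
          partsMS ν' = ((partsMS ν).erase old).erase chosen
            + {(old.1 + 1, !old.2), (chosen.1 + 1, !chosen.2)}))

/-- the second reduction of `p`-th kind: the inverse of the second dilation of `p`-th kind -/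
def SecondReductionRel (ν ν' : Overpartition) (p : ℕ) : Prop := SecondDilationRel ν' ν p

/-- the set of overpartitions satisfying the conditions of `Ẽ_{k,i}` whose Gordon
marking has exactly `N r` `r`-marked parts for `1 ≤ r ≤ k-1` -/
def ESetN (k i : ℕ) (N : ℕ → ℕ) : Set Overpartition :=
  {l | ECond k i l ∧ (∀ r, 1 ≤ r → r ≤ k-1 → gordonN l r = N r) ∧
    l.parts = ∑ j ∈ Finset.Icc 1 (k-1), N j}

def GSetN (k i : ℕ) (N : ℕ → ℕ) : Set Overpartition :=
  {l ∈ ESetN k i N | SmallestNonOverlined l}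

def HSetN (k i : ℕ) (N : ℕ → ℕ) : Set Overpartition :=
  {l ∈ ESetN k i N | SmallestOverlined l}

def BSetN (k i : ℕ) (N : ℕ → ℕ) : Set Overpartition :=
  {l ∈ GSetN k i N | NoOverlined l}

/-- the set of overpartitions satisfying the conditions of `Õ_{k,i}` whose
Göllnitz–Gordon marking has exactly `N r` `r`-marked parts for `1 ≤ r ≤ k-1` -/
def OSetN (k i : ℕ) (N : ℕ → ℕ) : Set Overpartition :=
  {l | OCond k i l ∧ (∀ r, 1 ≤ r → r ≤ k-1 → ggN l r = N r) ∧
    l.parts = ∑ j ∈ Finset.Icc 1 (k-1), N j}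

def WSetN (k i : ℕ) (N : ℕ → ℕ) : Set Overpartition :=
  {l ∈ OSetN k i N | NoOdd l}

/-- `(a;q)_n = ∏_{j=0}^{n-1} (1 - a q^j)` -/
noncomputable def qPoch (a q : ℂ) (n : ℕ) : ℂ := ∏ j ∈ Finset.range n, (1 - a * q ^ j)

/-- `(a;q)_∞ = ∏_{j=0}^{∞} (1 - a q^j)` -/
noncomputable def qPochInf (a q : ℂ) : ℂ := ∏' j : ℕ, (1 - a * q ^ j)

/-- `(a;q)_{n-1} = (a;q)_n / (1 - a q^{n-1})`, the standard meaning of a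
`q`-Pochhammer symbol with subscript `n - 1` (also for `n = 0`). -/
noncomputable def qPochSub1 (a q : ℂ) (n : ℕ) : ℂ := qPoch a q n / (1 - a * q ^ ((n : ℤ) - 1))

/-- sequences `N` with `N 1 ≥ N 2 ≥ ⋯ ≥ N (k-1) ≥ 0` (and `N j = 0` otherwise),
encoding the summation indices `N₁ ≥ ⋯ ≥ N_{k-1} ≥ 0` -/
def DecSeq (k : ℕ) : Set (ℕ → ℕ) :=
  {N | N 0 = 0 ∧ (∀ j, 1 ≤ j → N (j+1) ≤ N j) ∧ (∀ j, k ≤ j → N j = 0)}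

def doubleEmb : ℕ ↪ ℕ := ⟨fun t => 2 * t, mul_right_injective₀ two_ne_zero⟩

/-- doubling every part of an overpartition -/
noncomputable def double (l : Overpartition) : Overpartition where
  f := Finsupp.embDomain doubleEmb l.f
  fbar := Finsupp.embDomain doubleEmb l.fbar
  fbar_le_one := by
    intro t
    by_cases h : ∃ s, 2 * s = t
    · obtain ⟨s, rfl⟩ := h
      exact (Finsupp.embDomain_apply_self doubleEmb l.fbar s).trans_le (l.fbar_le_one s)
    · rw [Finsupp.embDomain_notin_range]
      · exact Nat.zero_le _
      · rintro ⟨s, rfl⟩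
        exact h ⟨s, rfl⟩
  f_zero := (Finsupp.embDomain_apply_self doubleEmb l.f 0).trans l.f_zero
  fbar_zero := (Finsupp.embDomain_apply_self doubleEmb l.fbar 0).trans l.fbar_zero

/-! Doubling lists the parts of `double l` as the doubles of the parts of `l`, in the same
order, and turns each condition of `Ẽ_{k,i}` into the corresponding condition of `Õ_{k,i}` for
an overpartition without odd parts (using `V_{2t+1}(double l) = V_t(l)`); halving inverts it.

The two markings are compared part by part along this common order. Overlined parts get mark 1
under both rules. For a non-overlined part `2t`, the Göllnitz–Gordon rule avoids the marks of the
parts `2t - 2` and `\overline{2t-1}`, i.e. of the doubles of the parts `t - 1`, exactly those the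
Gordon rule avoids for `t`. Its special case (forbid mark 1, reuse the smallest avoided mark)
occurs exactly when `t̄` is a part; then `t̄` precedes `t` with mark 1, so forbidding 1 changes
nothing and the reuse is Gordon's clause (ii). -/

lemma one_le_mex1 (S : Finset ℕ) : 1 ≤ mex1 S := by
  set L := (List.range (S.sup id + 2)).filter (fun r => decide (1 ≤ r ∧ r ∉ S))
  have hsup : S.sup id + 1 ∈ L := by
    have : S.sup id + 1 ∉ S := fun h => by
      have := Finset.le_sup (f := id) h
      simp only [id] at this
      omega
    simp [L, this]
  obtain ⟨a, L', hL⟩ := List.exists_cons_of_ne_nil (List.ne_nil_of_mem hsup)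
  have ha : a ∈ L := hL ▸ List.mem_cons_self
  change 1 ≤ L.headI
  rw [hL]
  exact (by simpa [L] using ha : _ ∧ 1 ≤ a ∧ _).2.1

lemma mex1_eq_one {S : Finset ℕ} (h : 1 ∉ S) : mex1 S = 1 := by
  simp [mex1, List.range_succ_eq_map, h]

section MarkFold

variable (m : List (OPart × ℕ) → OPart → ℕ)

lemma markFold_append (xs ys : List OPart) (acc : List (OPart × ℕ)) :
    markFold m (xs ++ ys) acc = markFold m ys (markFold m xs acc) := by
  induction xs generalizing acc with
  | nil => rfl
  | cons p xs ih => exact ih _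

lemma markFold_append_singleton (xs : List OPart) (p : OPart) (acc : List (OPart × ℕ)) :
    markFold m (xs ++ [p]) acc = markFold m xs acc ++ [(p, m (markFold m xs acc) p)] := by
  rw [markFold_append]
  rfl

lemma map_fst_markFold (xs : List OPart) (acc : List (OPart × ℕ)) :
    (markFold m xs acc).map Prod.fst = acc.map Prod.fst ++ xs := by
  induction xs generalizing acc with
  | nil => simp [markFold]
  | cons p xs ih => simp [markFold, ih]

lemma one_le_of_mem_markFold (hm : ∀ acc p, 1 ≤ m acc p) (xs : List OPart) :
    ∀ q ∈ markFold m xs [], 1 ≤ q.2 := by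
  induction xs using List.reverseRecOn with
  | nil => simp [markFold]
  | append_singleton xs p ih =>
    rw [markFold_append_singleton]
    intro q hq
    rcases List.mem_append.mp hq with hq | hq
    · exact ih q hq
    · simp only [List.mem_singleton] at hq
      exact hq ▸ hm _ _

variable {m}

lemma markFold_map {m' : List (OPart × ℕ) → OPart → ℕ} (f : OPart → OPart)
    (xs : List OPart)
    (h : ∀ ys p zs, xs = ys ++ p :: zs →
      m' ((markFold m ys []).map (Prod.map f id)) (f p) = m (markFold m ys []) p) :
    markFold m' (xs.map f) [] = (markFold m xs []).map (Prod.map f id) := by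
  induction xs using List.reverseRecOn with
  | nil => rfl
  | append_singleton xs p ih =>
    rw [List.map_append, List.map_singleton, markFold_append_singleton,
      markFold_append_singleton, ih fun ys q zs hxs => h ys q (zs ++ [p]) (by simp [hxs]),
      h xs p [] rfl]
    simp

end MarkFold

section PartsList

/-- the position of a part in the order `1̄ < 1 < 2̄ < 2 < ⋯` -/
def partKey (p : OPart) : ℕ := 2 * p.1 + (if p.2 then 0 else 1)

/-- an overlined part occurs at most once, so it is strictly below every later part -/
def PartPrecedes (a b : OPart) : Prop :=
  partKey a ≤ partKey b ∧ (a.2 = true → partKey a < partKey b)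

lemma partsListUpTo_succ (l : Overpartition) (B : ℕ) :
    partsListUpTo l (B + 1) = partsListUpTo l B ++
      ((if l.fbar (B + 1) = 1 then [(B + 1, true)] else []) ++
        List.replicate (l.f (B + 1)) (B + 1, false)) := by
  simp [partsListUpTo, List.range_succ, List.flatMap_append]

lemma mem_partsListUpTo {l : Overpartition} {p : OPart} {B : ℕ} :
    p ∈ partsListUpTo l B ↔ 1 ≤ p.1 ∧ p.1 ≤ B ∧
      ((p.2 = true ∧ l.fbar p.1 = 1) ∨ (p.2 = false ∧ 0 < l.f p.1)) := by
  induction B with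
  | zero =>
    simp only [partsListUpTo, List.range_zero, List.flatMap_nil, List.not_mem_nil, false_iff]
    omega
  | succ B ih =>
    obtain ⟨s, b⟩ := p
    rw [partsListUpTo_succ]
    simp only [List.mem_append, ih, List.mem_replicate]
    by_cases hs : s = B + 1
    · subst hs
      split_ifs <;> cases b <;> simp_all
    · split_ifs <;> cases b <;> simp [hs] <;> omega

lemma pairwise_partsListUpTo (l : Overpartition) (B : ℕ) :
    (partsListUpTo l B).Pairwise PartPrecedes := by
  induction B with
  | zero => simp [partsListUpTo]
  | succ B ih =>
    rw [partsListUpTo_succ, List.pairwise_append, List.pairwise_append]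
    refine ⟨ih, ⟨by split <;> simp,
      List.pairwise_replicate.mpr (.inr ⟨le_rfl, by simp⟩), ?_⟩, ?_⟩
    · intro a ha b hb
      split at ha <;> simp_all [PartPrecedes, partKey]
    · intro a ha b hb
      have ha' := (mem_partsListUpTo.mp ha).2.1
      have hb' : b.1 = B + 1 := by
        rcases List.mem_append.mp hb with h | h
        · split at h <;> simp_all
        · rw [List.eq_of_mem_replicate h]
      simp only [PartPrecedes, partKey, hb']
      split <;> split <;> omega

def PartsLE (l : Overpartition) (B : ℕ) : Prop := ∀ s, B < s → l.f s = 0 ∧ l.fbar s = 0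

lemma partsLE_obound (l : Overpartition) : PartsLE l (obound l) := by
  intro s hs
  constructor <;> by_contra h0 <;>
  · have hmem : s ∈ l.f.support ∪ l.fbar.support := by simp [h0]
    have := Finset.le_sup (f := id) hmem
    simp only [obound, id] at hs this
    omega

lemma mem_partsList {l : Overpartition} {p : OPart} :
    p ∈ partsList l ↔ 1 ≤ p.1 ∧
      ((p.2 = true ∧ l.fbar p.1 = 1) ∨ (p.2 = false ∧ 0 < l.f p.1)) := by
  rw [partsList, mem_partsListUpTo, and_congr_right_iff]
  refine fun _ => ⟨And.right, fun h => ⟨not_lt.mp fun hlt => ?_, h⟩⟩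
  have := partsLE_obound l _ hlt
  rcases h with ⟨-, h⟩ | ⟨-, h⟩ <;> omega

lemma lt_of_mem_prefix_overlined {l : Overpartition} {ys zs : List OPart} {t : ℕ}
    (h : partsList l = ys ++ (t, true) :: zs) : ∀ q ∈ ys, q.1 < t := by
  intro q hq
  have := (h ▸ pairwise_partsListUpTo l _ : (ys ++ (t, true) :: zs).Pairwise PartPrecedes)
    |>.rel_of_mem_append hq List.mem_cons_self
  obtain ⟨s, b⟩ := q
  cases b <;> simp [PartPrecedes, partKey] at this <;> omega

lemma overlined_mem_prefix {l : Overpartition} {ys zs : List OPart} {t : ℕ}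
    (hf : l.fbar t = 1) (h : partsList l = ys ++ (t, false) :: zs) : (t, true) ∈ ys := by
  have ht : 1 ≤ t := (mem_partsList.mp (h ▸ by simp : ((t, false) : OPart) ∈ partsList l)).1
  have hmem : ((t, true) : OPart) ∈ ys ++ (t, false) :: zs :=
    h ▸ mem_partsList.mpr ⟨ht, .inl ⟨rfl, hf⟩⟩
  rcases List.mem_append.mp hmem with hys | hzs
  · exact hys
  · have hsorted : (ys ++ (t, false) :: zs).Pairwise PartPrecedes :=
      h ▸ pairwise_partsListUpTo l _
    rcases List.mem_cons.mp hzs with heq | hzs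
    · simp at heq
    · have := List.rel_of_pairwise_cons (List.pairwise_append.mp hsorted).2.1 hzs
      simp [PartPrecedes, partKey] at this

end PartsList

section Double

def dbl (p : OPart) : OPart := (2 * p.1, p.2)

lemma double_f_two_mul (l : Overpartition) (t : ℕ) : (double l).f (2 * t) = l.f t :=
  Finsupp.embDomain_apply_self doubleEmb l.f t

lemma double_fbar_two_mul (l : Overpartition) (t : ℕ) : (double l).fbar (2 * t) = l.fbar t :=
  Finsupp.embDomain_apply_self doubleEmb l.fbar t

lemma double_f_of_odd (l : Overpartition) {s : ℕ} (h : s % 2 = 1) : (double l).f s = 0 :=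
  Finsupp.embDomain_of_notMem_range _ _ _ (by rintro ⟨a, rfl⟩; simp [doubleEmb] at h)

lemma double_fbar_of_odd (l : Overpartition) {s : ℕ} (h : s % 2 = 1) : (double l).fbar s = 0 :=
  Finsupp.embDomain_of_notMem_range _ _ _ (by rintro ⟨a, rfl⟩; simp [doubleEmb] at h)

lemma partsListUpTo_eq_of_le {l : Overpartition} {B C : ℕ} (h : PartsLE l B) (hBC : B ≤ C) :
    partsListUpTo l C = partsListUpTo l B := by
  induction C, hBC using Nat.le_induction with
  | base => rfl
  | succ C hBC ih =>
    rw [partsListUpTo_succ, ih, (h _ (by omega)).1, (h _ (by omega)).2]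
    simp

lemma partsList_eq_partsListUpTo {l : Overpartition} {B : ℕ} (h : PartsLE l B) :
    partsList l = partsListUpTo l B := by
  rcases le_total B (obound l) with hB | hB
  · exact partsListUpTo_eq_of_le h hB
  · exact (partsListUpTo_eq_of_le (partsLE_obound l) hB).symm

lemma partsLE_double {l : Overpartition} {B : ℕ} (h : PartsLE l B) :
    PartsLE (double l) (2 * B) := by
  intro s hs
  rcases Nat.even_or_odd' s with ⟨u, rfl | rfl⟩
  · rw [double_f_two_mul, double_fbar_two_mul]
    exact h u (by omega)
  · exact ⟨double_f_of_odd l (by omega), double_fbar_of_odd l (by omega)⟩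

lemma partsListUpTo_double (l : Overpartition) (B : ℕ) :
    partsListUpTo (double l) (2 * B) = (partsListUpTo l B).map dbl := by
  induction B with
  | zero => simp [partsListUpTo]
  | succ B ih =>
    rw [show 2 * (B + 1) = 2 * B + 1 + 1 by ring, partsListUpTo_succ, partsListUpTo_succ,
      partsListUpTo_succ, List.map_append, ← ih, double_f_of_odd l (by omega),
      double_fbar_of_odd l (by omega), show 2 * B + 1 + 1 = 2 * (B + 1) by ring,
      double_f_two_mul, double_fbar_two_mul]
    by_cases hB : l.fbar (B + 1) = 1 <;> simp [hB, dbl, List.map_replicate]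

lemma partsList_double (l : Overpartition) : partsList (double l) = (partsList l).map dbl := by
  rw [partsList_eq_partsListUpTo (partsLE_double (partsLE_obound l)), partsListUpTo_double]
  rfl

@[ext]
lemma Overpartition.ext {a b : Overpartition} (hf : a.f = b.f) (hfbar : a.fbar = b.fbar) :
    a = b := by
  cases a; cases b; simp_all

lemma double_injective : Function.Injective double := by
  intro a b h
  ext t
  · simpa [double_f_two_mul] using congrArg (fun l => l.f (2 * t)) h
  · simpa [double_fbar_two_mul] using congrArg (fun l => l.fbar (2 * t)) h

lemma parts_double (l : Overpartition) : (double l).parts = l.parts := by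
  simp [Overpartition.parts, double, Finsupp.sum_embDomain]

lemma wt_double (l : Overpartition) : (double l).wt = 2 * l.wt := by
  simp only [Overpartition.wt, double, Finsupp.sum_embDomain]
  simp only [Finsupp.sum, Nat.mul_add, Finset.mul_sum, doubleEmb, Function.Embedding.coeFn_mk,
    mul_assoc]

lemma V_double (l : Overpartition) (t : ℕ) : (double l).V (2 * t + 1) = l.V t := by
  induction t with
  | zero => simp [Overpartition.V, double_fbar_of_odd]
  | succ t ih =>
    rw [Overpartition.V, show 2 * (t + 1) + 1 = 2 * t + 1 + 1 + 1 by ring,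
      Finset.sum_Icc_succ_top (by omega), Finset.sum_Icc_succ_top (by omega), ← Overpartition.V,
      ih, double_fbar_of_odd l (s := 2 * t + 1 + 1 + 1) (by omega),
      show 2 * t + 1 + 1 = 2 * (t + 1) by ring,
      double_fbar_two_mul, Overpartition.V, Overpartition.V, Finset.sum_Icc_succ_top (by omega),
      add_zero]

noncomputable def halve (l : Overpartition) : Overpartition where
  f := Finsupp.comapDomain (2 * ·) l.f fun _ _ _ _ h => by simpa using h
  fbar := Finsupp.comapDomain (2 * ·) l.fbar fun _ _ _ _ h => by simpa using h
  fbar_le_one _ := l.fbar_le_one _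
  f_zero := l.f_zero
  fbar_zero := l.fbar_zero

lemma halve_f (l : Overpartition) (t : ℕ) : (halve l).f t = l.f (2 * t) := rfl

lemma halve_fbar (l : Overpartition) (t : ℕ) : (halve l).fbar t = l.fbar (2 * t) := rfl

lemma double_halve {l : Overpartition} (h : NoOdd l) : double (halve l) = l := by
  ext s <;> rcases Nat.even_or_odd' s with ⟨u, rfl | rfl⟩
  · exact double_f_two_mul _ u
  · rw [double_f_of_odd _ (by omega), (h _ (by omega)).1]
  · exact double_fbar_two_mul _ u
  · rw [double_fbar_of_odd _ (by omega), (h _ (by omega)).2]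

lemma noOdd_double (l : Overpartition) : NoOdd (double l) :=
  fun _ hs => ⟨double_f_of_odd l hs, double_fbar_of_odd l hs⟩

end Double

section Conditions

variable {k i : ℕ}

lemma oCond_double {l : Overpartition} (hE : ECond k i l) : OCond k i (double l) := by
  obtain ⟨h1, h2, h3⟩ := hE
  have hodd (t : ℕ) := double_fbar_of_odd l (s := 2 * t + 1) (by omega)
  have hf_odd (t : ℕ) := double_f_of_odd l (s := 2 * t + 1) (by omega)
  have hsucc (t : ℕ) : 2 * t + 2 = 2 * (t + 1) := by ring
  refine ⟨?_, fun t ht => ?_, fun t hf => ?_, fun t ht heq => ?_, fun t hf => ?_⟩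
  · simpa [hodd 0, ← double_f_two_mul l 1] using h1
  · simpa [hodd, hsucc, double_f_two_mul, double_fbar_two_mul] using h2 t ht
  · simp [hf_odd] at hf
  · simp only [hodd, hsucc, double_f_two_mul, double_fbar_two_mul, add_zero, mul_zero,
      V_double] at heq ⊢
    exact h3 t ht heq
  · simp [hf_odd] at hf

lemma eCond_halve {l : Overpartition} (hO : OCond k i l) (hodd : NoOdd l) :
    ECond k i (halve l) := by
  obtain ⟨h1, h2, -, h4, -⟩ := hO
  have hfbar (t : ℕ) : l.fbar (2 * t + 1) = 0 := (hodd _ (by omega)).2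
  have hsucc (t : ℕ) : 2 * (t + 1) = 2 * t + 2 := by ring
  have hV (t : ℕ) : (halve l).V t = l.V (2 * t + 1) := by rw [← V_double, double_halve hodd]
  refine ⟨?_, fun t ht => ?_, fun t ht heq => ?_⟩
  · exact (Nat.le_add_left _ _).trans h1
  · simpa [halve_f, halve_fbar, hsucc, hfbar] using h2 t ht
  · simp only [halve_f, halve_fbar, hsucc, hV] at heq ⊢
    simpa [hfbar] using h4 t ht (by simpa [hfbar] using heq)

end Conditions

section Marking

def marksAt (acc : List (OPart × ℕ)) (s : ℕ) : Finset ℕ :=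
  marksWhere acc fun q => decide (q.1 = s)

def marksBelow (acc : List (OPart × ℕ)) (t : ℕ) : Finset ℕ :=
  marksWhere acc fun q => decide (q.1 + 1 = t)

def ggLowerMarks (acc : List (OPart × ℕ)) (s : ℕ) : Finset ℕ :=
  marksWhere acc fun q => decide (q.1 = s - 2 ∨ (q.1 = s - 1 ∧ q.2 = true))

def eraseMin (S : Finset ℕ) : Finset ℕ := if h : S.Nonempty then S.erase (S.min' h) else S

lemma mem_marksWhere {acc : List (OPart × ℕ)} {test : OPart → Bool} {x : ℕ} :
    x ∈ marksWhere acc test ↔ ∃ q ∈ acc, test q.1 = true ∧ q.2 = x := by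
  simp [marksWhere, and_assoc]

lemma one_notMem_eraseMin {S : Finset ℕ} (hS : ∀ x ∈ S, 1 ≤ x) : 1 ∉ eraseMin S := by
  unfold eraseMin
  split_ifs with hne
  · intro h1
    exact Finset.ne_of_mem_erase h1
      (le_antisymm (hS _ (Finset.min'_mem _ _)) (Finset.min'_le _ _ (Finset.mem_of_mem_erase h1)))
  · exact fun h1 => hne ⟨1, h1⟩

lemma eraseMin_eq_erase_one {S : Finset ℕ} (h1 : 1 ∈ S) (hS : ∀ x ∈ S, 1 ≤ x) :
    eraseMin S = S.erase 1 := by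
  rw [eraseMin, dif_pos ⟨1, h1⟩,
    le_antisymm (Finset.min'_le _ _ h1) (hS _ (Finset.min'_mem _ _))]

lemma gordonMarkOf_eq (l : Overpartition) (acc : List (OPart × ℕ)) (t : ℕ) (b : Bool) :
    gordonMarkOf l acc (t, b) =
      if l.fbar t = 1 then mex1 (marksAt acc t ∪ eraseMin (marksBelow acc t))
      else mex1 (marksAt acc t ∪ marksBelow acc t) := rfl

lemma ggMarkOf_dbl_overlined (l : Overpartition) (acc : List (OPart × ℕ)) (t : ℕ) :
    ggMarkOf l acc (dbl (t, true)) = 1 := by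
  simp [ggMarkOf, dbl]

lemma ggMarkOf_dbl_nonoverlined (l : Overpartition) (acc : List (OPart × ℕ)) (t : ℕ) :
    ggMarkOf l acc (dbl (t, false)) =
      if 1 ∈ ggLowerMarks acc (2 * t) ∨ (l.f (2 * t - 1) = 0 ∧ l.fbar (2 * t) = 0) then
        mex1 (marksAt acc (2 * t) ∪ ggLowerMarks acc (2 * t))
      else
        mex1 (insert 1 (marksAt acc (2 * t)) ∪ eraseMin (ggLowerMarks acc (2 * t))) := by
  simp only [ggMarkOf, dbl, Nat.mul_mod_right, zero_ne_one, and_true, ↓reduceIte,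
    Bool.false_eq_true, and_false, Finset.insert_union]
  rfl

lemma marksAt_map_dbl (acc : List (OPart × ℕ)) (t : ℕ) :
    marksAt (acc.map (Prod.map dbl id)) (2 * t) = marksAt acc t := by
  ext x
  simp [marksAt, mem_marksWhere, dbl]

lemma ggLowerMarks_map_dbl (acc : List (OPart × ℕ)) {t : ℕ} (ht : 1 ≤ t) :
    ggLowerMarks (acc.map (Prod.map dbl id)) (2 * t) = marksBelow acc t := by
  ext x
  simp only [ggLowerMarks, marksBelow, mem_marksWhere, List.mem_map, exists_exists_and_eq_and]
  refine exists_congr fun q => and_congr_right fun _ => and_congr_left fun _ => ?_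
  rw [decide_eq_true_iff, decide_eq_true_iff]
  simp only [Prod.map, dbl, id]
  constructor
  · rintro (h | ⟨h, -⟩) <;> omega
  · intro h
    left
    omega

lemma one_le_gordonMarkOf (l : Overpartition) (acc : List (OPart × ℕ)) (p : OPart) :
    1 ≤ gordonMarkOf l acc p := by
  rw [gordonMarkOf]
  split <;> exact one_le_mex1 _

section Prefix

variable {l : Overpartition} {ys zs : List OPart}

lemma gordonMarkOf_overlined {t : ℕ} (h : partsList l = ys ++ (t, true) :: zs) :
    gordonMarkOf l (markFold (gordonMarkOf l) ys []) (t, true) = 1 := by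
  have hfbar : l.fbar t = 1 := by
    simpa using (mem_partsList.mp (h ▸ by simp : ((t, true) : OPart) ∈ partsList l)).2
  rw [gordonMarkOf_eq, if_pos hfbar]
  refine mex1_eq_one fun h1 => (Finset.mem_union.mp h1).elim ?_ ?_
  · intro hsame
    obtain ⟨q, hq, hsize, -⟩ := mem_marksWhere.mp hsame
    have hys : q.1 ∈ ys := by
      simpa [map_fst_markFold] using List.mem_map_of_mem (f := Prod.fst) hq
    have := lt_of_mem_prefix_overlined h q.1 hys
    simp only [decide_eq_true_eq] at hsize
    omega
  · refine one_notMem_eraseMin fun x hx => ?_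
    obtain ⟨q, hq, -, rfl⟩ := mem_marksWhere.mp hx
    exact one_le_of_mem_markFold _ (one_le_gordonMarkOf l) ys q hq

lemma gordon_mark_eq_one_of_overlined (h : partsList l = ys ++ zs) :
    ∀ q ∈ markFold (gordonMarkOf l) ys [], q.1.2 = true → q.2 = 1 := by
  induction ys using List.reverseRecOn generalizing zs with
  | nil => simp [markFold]
  | append_singleton ys p ih =>
    have h' : partsList l = ys ++ p :: zs := by simpa using h
    rw [markFold_append_singleton]
    intro q hq hbar
    rcases List.mem_append.mp hq with hq | hq
    · exact ih h' q hq hbar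
    · obtain rfl := List.mem_singleton.mp hq
      obtain ⟨t, b⟩ := p
      obtain rfl : b = true := hbar
      exact gordonMarkOf_overlined h'

lemma ggMarkOf_double {p : OPart} (h : partsList l = ys ++ p :: zs) :
    ggMarkOf (double l) ((markFold (gordonMarkOf l) ys []).map (Prod.map dbl id)) (dbl p) =
      gordonMarkOf l (markFold (gordonMarkOf l) ys []) p := by
  set A := markFold (gordonMarkOf l) ys []
  obtain ⟨t, b⟩ := p
  cases b with
  | true => rw [ggMarkOf_dbl_overlined, gordonMarkOf_overlined h]
  | false =>
    have ht : 1 ≤ t := (mem_partsList.mp (h ▸ by simp : ((t, false) : OPart) ∈ partsList l)).1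
    have hbelow : ∀ x ∈ marksBelow A t, 1 ≤ x := fun x hx => by
      obtain ⟨q, hq, -, rfl⟩ := mem_marksWhere.mp hx
      exact one_le_of_mem_markFold _ (one_le_gordonMarkOf l) ys q hq
    rw [ggMarkOf_dbl_nonoverlined, gordonMarkOf_eq, marksAt_map_dbl, ggLowerMarks_map_dbl A ht,
      double_f_of_odd l (s := 2 * t - 1) (by omega), double_fbar_two_mul]
    rcases Nat.le_one_iff_eq_zero_or_eq_one.mp (l.fbar_le_one t) with hfbar | hfbar
    · rw [if_pos (.inr ⟨rfl, hfbar⟩), if_neg (by omega)]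
    · have h1 : 1 ∈ marksAt A t := by
        have hA : ((t, true) : OPart) ∈ A.map Prod.fst := by
          simpa [A, map_fst_markFold] using overlined_mem_prefix hfbar h
        obtain ⟨q, hq, hq1⟩ := List.mem_map.mp hA
        exact mem_marksWhere.mpr ⟨q, hq, by simp [hq1],
          gordon_mark_eq_one_of_overlined h q hq (by simp [hq1])⟩
      rw [if_pos hfbar]
      by_cases h1below : 1 ∈ marksBelow A t
      · rw [if_pos (.inl h1below), eraseMin_eq_erase_one h1below hbelow,
          Finset.union_erase_of_mem h1]
      · rw [if_neg (by simp [h1below, hfbar]), Finset.insert_eq_self.mpr h1]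

end Prefix

lemma ggMarked_double (l : Overpartition) :
    ggMarked (double l) = (gordonMarked l).map (Prod.map dbl id) := by
  rw [ggMarked, partsList_double]
  exact markFold_map dbl _ fun _ _ _ h => ggMarkOf_double h

lemma ggN_double (l : Overpartition) (r : ℕ) : ggN (double l) r = gordonN l r := by
  simp [ggN, gordonN, ggMarked_double, List.filter_map, Function.comp_def]

end Marking

theorem doubling_bijection_general
    (k i : ℕ) (N : ℕ → ℕ) (n : ℕ) :
    Set.BijOn double {l | l ∈ ESetN k i N ∧ l.wt = n} {l | l ∈ WSetN k i N ∧ l.wt = 2 * n} ∧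
    (∀ l, l ∈ ESetN k i N ∧ l.wt = n →
      ggMarked (double l) = (gordonMarked l).map (fun q => ((2 * q.1.1, q.1.2), q.2))) := by
  refine ⟨⟨?_, double_injective.injOn, ?_⟩, fun l _ => ggMarked_double l⟩
  · rintro l ⟨⟨hE, hN, hparts⟩, hwt⟩
    refine ⟨⟨⟨oCond_double hE, fun r hr hrk => ?_, ?_⟩, noOdd_double l⟩, ?_⟩
    · rw [ggN_double, hN r hr hrk]
    · rw [parts_double, hparts]
    · rw [wt_double, hwt]
  · rintro l ⟨⟨⟨hO, hN, hparts⟩, hodd⟩, hwt⟩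
    have hl := double_halve hodd
    refine ⟨halve l, ⟨⟨eCond_halve hO hodd, fun r hr hrk => ?_, ?_⟩, ?_⟩, hl⟩
    · rw [← ggN_double, hl, hN r hr hrk]
    · rw [← parts_double, hl, hparts]
    · have := wt_double (halve l)
      rw [hl] at this
      omega

/-- doubling every part is a bijection from `Ẽ_{N₁,…,N_{k-1};i}(n)` onto
`W̃_{N₁,…,N_{k-1};i}(2n)`, and it sends the Gordon marking of each part to the
Göllnitz–Gordon marking of the doubled part. -/
theorem doubling_bijection
    (k i : ℕ) (hik : i < k) (hi : 1 ≤ i) (N : ℕ → ℕ)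
    (hmono : ∀ j, 1 ≤ j → j + 2 ≤ k → N (j+1) ≤ N j) (n : ℕ) :
    Set.BijOn double {l | l ∈ ESetN k i N ∧ l.wt = n} {l | l ∈ WSetN k i N ∧ l.wt = 2 * n} ∧
    (∀ l, l ∈ ESetN k i N ∧ l.wt = n →
      ggMarked (double l) = (gordonMarked l).map (fun q => ((2 * q.1.1, q.1.2), q.2))) :=
  doubling_bijection_general k i N n
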